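/- If R is a von Neumann regular ring that is central linear Armendariz, then R is reduced. -/

import Mathlib

open Polynomial

/-- A ring `R` is *central linear Armendariz* if whenever the product of two linear
polynomials `(a₀ + a₁x)(b₀ + b₁x) = 0` in `R[x]`, each product `aᵢbⱼ` is central in `R`. -/
def CentralLinearArmendariz (R : Type*) [Ring R] : Prop :=
  ∀ a₀ a₁ b₀ b₁ : R,
    (C a₀ + C a₁ * X) * (C b₀ + C b₁ * X) = 0 →
      a₀ * b₀ ∈ Set.center R ∧ a₀ * b₁ ∈ Set.center R ∧
      a₁ * b₀ ∈ Set.center R ∧ a₁ * b₁ ∈ Set.center R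

/-- A ring `R` is *linear Armendariz* if whenever the product of two linear
polynomials `(a₀ + a₁x)(b₀ + b₁x) = 0` in `R[x]`, each product `aᵢbⱼ` is zero. -/
def LinearArmendariz (R : Type*) [Ring R] : Prop :=
  ∀ a₀ a₁ b₀ b₁ : R,
    (C a₀ + C a₁ * X) * (C b₀ + C b₁ * X) = 0 →
      a₀ * b₀ = 0 ∧ a₀ * b₁ = 0 ∧ a₁ * b₀ = 0 ∧ a₁ * b₁ = 0

/-- A ring `R` is *Armendariz* if whenever `f g : R[x]` satisfy `f * g = 0`,
every product of a coefficient of `f` with a coefficient of `g` is zero. -/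
def Armendariz (R : Type*) [Ring R] : Prop :=
  ∀ f g : R[X], f * g = 0 → ∀ i j : ℕ, f.coeff i * g.coeff j = 0

/- In a central linear Armendariz ring every idempotent `e` is central: for `z = e r (1 - e)` the
product `(e + z t)((1 - e) - z t)` in `R[t]` vanishes, so `z (1 - e) = z` is central, and then
`z = e z = z e = 0`. A von Neumann regular ring whose idempotents are central is reduced: if
`a = a x a` and `a² = 0`, then `x a` is a central idempotent and `a = a (x a) = x a² = 0`. -/

theorem isReduced_of_forall_mul_self_eq_zero {M₀ : Type*} [MonoidWithZero M₀]
    (h : ∀ a : M₀, a * a = 0 → a = 0) : IsReduced M₀ := by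
  have pow_succ_eq_zero : ∀ (n : ℕ) (a : M₀), a ^ (n + 1) = 0 → a = 0 := by
    intro n
    induction n with
    | zero => simp
    | succ n ih =>
      intro a ha
      refine ih a (h _ ?_)
      rw [← pow_add]
      exact pow_eq_zero_of_le (by omega) ha
  exact ⟨fun a ⟨n, ha⟩ => pow_succ_eq_zero n a (pow_eq_zero_of_le n.le_succ ha)⟩

theorem isReduced_of_regular_of_commute_idempotent {R : Type*} [Ring R]
    (hreg : ∀ a : R, ∃ x : R, a = a * x * a)
    (hcomm : ∀ e : R, IsIdempotentElem e → ∀ r, Commute e r) : IsReduced R := by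
  refine isReduced_of_forall_mul_self_eq_zero fun a ha => ?_
  obtain ⟨x, hx⟩ := hreg a
  have he : IsIdempotentElem (x * a) := by
    rw [IsIdempotentElem, mul_assoc, ← mul_assoc a, ← hx]
  calc a = a * (x * a) := by rw [← mul_assoc, ← hx]
    _ = x * a * a := (hcomm _ he a).eq.symm
    _ = 0 := by rw [mul_assoc, ha, mul_zero]

theorem linear_mul_linear {R : Type*} [Ring R] (a₀ a₁ b₀ b₁ : R) :
    (C a₀ + C a₁ * X) * (C b₀ + C b₁ * X) =
      C (a₀ * b₀) + C (a₀ * b₁ + a₁ * b₀) * X + C (a₁ * b₁) * X ^ 2 := by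
  simp only [add_mul, mul_add, mul_assoc, X_mul_C, ← C_mul, C_add, sq]
  rw [← mul_assoc X, X_mul_C, mul_assoc]
  simp only [← mul_assoc, ← C_mul]
  abel

namespace CentralLinearArmendariz

variable {R : Type*} [Ring R]

theorem mul_mul_one_sub_eq_zero (h : CentralLinearArmendariz R) {e : R}
    (he : IsIdempotentElem e) (r : R) : e * r * (1 - e) = 0 := by
  set z := e * r * (1 - e) with hz
  have hez : e * z = z := by rw [hz, ← mul_assoc, ← mul_assoc, he.eq]
  have hze : z * e = 0 := by rw [hz, mul_assoc, he.one_sub_mul_self, mul_zero]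
  have hz_one_sub : z * (1 - e) = z := by rw [mul_one_sub, hze, sub_zero]
  have hzz : z * z = 0 := by nth_rw 2 [← hez]; rw [← mul_assoc, hze, zero_mul]
  have hprod : (C e + C z * X) * (C (1 - e) + C (-z) * X) = 0 := by
    rw [linear_mul_linear, he.mul_one_sub_self, mul_neg, mul_neg, hez, hz_one_sub, hzz,
      neg_add_cancel, neg_zero]
    simp
  obtain ⟨-, -, hcentral, -⟩ := h e z (1 - e) (-z) hprod
  rw [hz_one_sub, Semigroup.mem_center_iff] at hcentral
  rw [← hez, hcentral e, hze]

theorem commute_of_isIdempotentElem (h : CentralLinearArmendariz R) {e : R}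
    (he : IsIdempotentElem e) (r : R) : Commute e r := by
  have left : e * r = e * r * e := by
    simpa [mul_one_sub, sub_eq_zero] using h.mul_mul_one_sub_eq_zero he r
  have right : r * e = e * r * e := by
    simpa [sub_mul, sub_eq_zero] using h.mul_mul_one_sub_eq_zero he.one_sub r
  exact left.trans right.symm

end CentralLinearArmendariz

/-- A von Neumann regular, central linear Armendariz ring is reduced. -/
theorem stmt_4 (R : Type*) [Ring R] (hvnr : ∀ a : R, ∃ x : R, a = a * x * a)
    (h : CentralLinearArmendariz R) : IsReduced R :=
  isReduced_of_regular_of_commute_idempotent hvnr fun _ he => h.commute_of_isIdempotentElem he
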